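/- arXiv:2003.05930 — 2 statements merged into one kernel-verified Lean document; each statement's English description precedes it below -/
import Mathlib

section
/- The class Σ is a saturated right multiplicative system in Preglid FR: (i) Σ contains all identity morphisms and is closed under composition; (ii) for every f : Z → W and every s : Y → W with s ∈ Σ there exist g : X → Y and t : X → Z with t ∈ Σ and s∘g = f∘t; (iii) for all parallel morphisms f,g : X → Y and every s ∈ Σ with source Y such that s∘f = s∘g, there exists t ∈ Σ with target X such that f∘t = g∘t; and (iv) a morphism f of Preglid FR belongs to Σ if and only if Q(f) is an isomorphism in Glid FR. -/
/-!
A morphism lies in `Σ` exactly when its restriction `j^*` to `FF_Λ R` is an isomorphism; this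
makes `Σ` multiplicative, and saturated because `Q ⋙ φ = j^*`. Subfunctors and pointwise
products of pregliders are pregliders, so equalizers and pullbacks can be computed pointwise
inside `Preglid FR`. Pulling back along a morphism bijective on `Λ` gives a morphism bijective
on `Λ`, which is the Ore condition; if `f ≫ s = g ≫ s` with `s ∈ Σ`, then `f` and `g` agree
on `Λ`, so the inclusion of their equalizer lies in `Σ`, which is right cancellability.
-/

set_option linter.unusedSectionVars false
set_option maxHeartbeats 1000000
set_option synthInstance.maxHeartbeats 1000000
set_option maxHeartbeats 2000000

noncomputable section

open CategoryTheory CategoryTheory.Limits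

universe u

namespace GliderPaper

/-- A `Γ`-filtration `FR` on a unital ring `R`: additive subgroups `F γ` with
`1 ∈ F 1`, monotone in `γ`, and multiplicative. -/
structure RingFiltration (Γ : Type u) [Group Γ] [PartialOrder Γ] (R : Type u) [Ring R] where
  F : Γ → AddSubgroup R
  one_mem : (1 : R) ∈ F 1
  mono : ∀ {α β : Γ}, α ≤ β → F α ≤ F β
  mul_mem : ∀ {α β : Γ} {a b : R}, a ∈ F α → b ∈ F β → a * b ∈ F (α * β)

variable {Γ : Type u} [Group Γ] [PartialOrder Γ]
  [CovariantClass Γ Γ (· * ·) (· ≤ ·)] [CovariantClass Γ Γ (Function.swap (· * ·)) (· ≤ ·)]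
  {R : Type u} [Ring R]

/-- Objects of the extended filtered companion category `oFF_Λ R`:
the disjoint union `Λ ⊔ {∞}`. -/
inductive OFF (FR : RingFiltration Γ R) (Λ : Set Γ) : Type u
  | of (α : Λ)
  | infty

/-- Objects of the filtered companion category `FF_Λ R`: the set `Λ`. -/
inductive FF (FR : RingFiltration Γ R) (Λ : Set Γ) : Type u
  | of (α : Λ)

variable (FR : RingFiltration Γ R) (Λ : Set Γ)

namespace OFF

/-- `le X Y` holds iff the canonical morphism `1_{X,Y}` is defined, i.e. `X ≤ Y` in `Λ`,
or `Y = ∞`. -/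
def le : OFF FR Λ → OFF FR Λ → Prop
  | of α, of β => (α : Γ) ≤ (β : Γ)
  | _, infty => True
  | infty, of _ => False

open scoped Classical in
/-- The additive subgroup of `R` of morphisms `X ⟶ Y` in `oFF_Λ R`:
`Hom(α,β) = F_{βα⁻¹}R` for `α ≤ β` in `Λ`, `Hom(X,∞) = R`, and `0` otherwise. -/
noncomputable def homGrp : OFF FR Λ → OFF FR Λ → AddSubgroup R
  | of α, of β => if (α : Γ) ≤ (β : Γ) then FR.F ((β : Γ) * (α : Γ)⁻¹) else ⊥
  | _, infty => ⊤
  | infty, of _ => ⊥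

theorem le_refl' : ∀ X : OFF FR Λ, le FR Λ X X
  | of _ => _root_.le_refl _
  | infty => trivial

theorem one_mem_homGrp : ∀ {X Y : OFF FR Λ}, le FR Λ X Y → (1 : R) ∈ homGrp FR Λ X Y
  | of α, of β, h => by
      have h' : (α : Γ) ≤ (β : Γ) := h
      have h1 : (1 : Γ) ≤ (β : Γ) * (α : Γ)⁻¹ := by
        rw [← mul_inv_cancel (α : Γ)]
        exact mul_le_mul_left h' _
      simpa [homGrp, if_pos h'] using FR.mono h1 FR.one_mem
  | of _, infty, _ => trivial
  | infty, infty, _ => trivial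
  | infty, of _, h => h.elim

theorem mul_mem_homGrp : ∀ {X Y Z : OFF FR Λ} {f g : R},
    f ∈ homGrp FR Λ X Y → g ∈ homGrp FR Λ Y Z → g * f ∈ homGrp FR Λ X Z := by
  intro X Y Z f g hf hg
  cases X <;> cases Y <;> cases Z <;> simp only [homGrp] at hf hg ⊢ <;> try trivial
  case of.of.of a b c =>
    by_cases hab : (a : Γ) ≤ (b : Γ)
    · by_cases hbc : (b : Γ) ≤ (c : Γ)
      · rw [if_pos hab] at hf
        rw [if_pos hbc] at hg
        rw [if_pos (le_trans hab hbc)]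
        have := FR.mul_mem hg hf
        rwa [show (c : Γ) * (b : Γ)⁻¹ * ((b : Γ) * (a : Γ)⁻¹) = (c : Γ) * (a : Γ)⁻¹ by
          group] at this
      · rw [if_neg hbc] at hg
        rw [AddSubgroup.mem_bot] at hg
        subst hg
        simp only [zero_mul]
        exact AddSubgroup.zero_mem _
    · rw [if_neg hab] at hf
      rw [AddSubgroup.mem_bot] at hf
      subst hf
      simp only [mul_zero]
      exact AddSubgroup.zero_mem _
  case of.infty.of a c =>
    rw [AddSubgroup.mem_bot] at hg
    subst hg
    simp only [zero_mul]
    exact AddSubgroup.zero_mem _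
  case infty.of.of b c =>
    rw [AddSubgroup.mem_bot] at hf
    subst hf
    simp only [mul_zero]
    exact AddSubgroup.zero_mem _
  case infty.infty.of c =>
    rw [AddSubgroup.mem_bot] at hg
    subst hg
    simp only [zero_mul]
    exact AddSubgroup.zero_mem _

instance : Category (OFF FR Λ) where
  Hom X Y := homGrp FR Λ X Y
  id X := ⟨1, one_mem_homGrp FR Λ (le_refl' FR Λ X)⟩
  comp f g := ⟨g.1 * f.1, mul_mem_homGrp FR Λ f.2 g.2⟩
  id_comp f := Subtype.ext (mul_one f.1)
  comp_id f := Subtype.ext (one_mul f.1)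
  assoc f g h := Subtype.ext (mul_assoc h.1 g.1 f.1).symm

instance : Preadditive (OFF FR Λ) where
  homGroup X Y := inferInstanceAs (AddCommGroup (homGrp FR Λ X Y))
  add_comp _ _ _ f f' g := Subtype.ext (mul_add g.1 f.1 f'.1)
  comp_add _ _ _ f g g' := Subtype.ext (add_mul g.1 g'.1 f.1)

end OFF

namespace FF

/-- The inclusion of the objects of `FF_Λ R` into those of `oFF_Λ R`. -/
def toOFF : FF FR Λ → OFF FR Λ
  | of α => .of α

instance : Category (FF FR Λ) where
  Hom X Y := OFF.homGrp FR Λ (toOFF FR Λ X) (toOFF FR Λ Y)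
  id X := ⟨1, OFF.one_mem_homGrp FR Λ (OFF.le_refl' FR Λ _)⟩
  comp f g := ⟨g.1 * f.1, OFF.mul_mem_homGrp FR Λ f.2 g.2⟩
  id_comp f := Subtype.ext (mul_one f.1)
  comp_id f := Subtype.ext (one_mul f.1)
  assoc f g h := Subtype.ext (mul_assoc h.1 g.1 f.1).symm

instance : Preadditive (FF FR Λ) where
  homGroup X Y := inferInstanceAs (AddCommGroup (OFF.homGrp FR Λ (toOFF FR Λ X) (toOFF FR Λ Y)))
  add_comp _ _ _ f f' g := Subtype.ext (mul_add g.1 f.1 f'.1)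
  comp_add _ _ _ f g g' := Subtype.ext (add_mul g.1 g'.1 f.1)

end FF

/-- The inclusion functor `j : FF_Λ R ⥤ oFF_Λ R`. -/
def jF : FF FR Λ ⥤ OFF FR Λ where
  obj := FF.toOFF FR Λ
  map f := f
  map_id _ := rfl
  map_comp _ _ := rfl

instance : (jF FR Λ).Additive := ⟨rfl⟩

/-- `Mod C`: the category of additive functors from `C` to abelian groups. -/
abbrev Mod (C : Type u) [Category.{u} C] [Preadditive C] : Type (u + 1) :=
  C ⥤+ AddCommGrpCat.{u}

/-- The component at `X` of a morphism in `Mod C`. -/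
def mapp {C : Type u} [Category.{u} C] [Preadditive C] {M N : Mod C} (f : M ⟶ N) (X : C) :
    M.obj.obj X ⟶ N.obj.obj X :=
  (show M.obj ⟶ N.obj from f.hom).app X

/-- The canonical morphism `1_{X,Y}` in `oFF_Λ R`, given by `1_R`. -/
def unitHom (X Y : OFF FR Λ) (h : OFF.le FR Λ X Y) : X ⟶ Y :=
  ⟨1, OFF.one_mem_homGrp FR Λ h⟩

/-- The canonical morphism `1_{α,β}` in `FF_Λ R`, given by `1_R`. -/
def unitHomFF (α β : Λ) (h : (α : Γ) ≤ (β : Γ)) : (FF.of α : FF FR Λ) ⟶ FF.of β :=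
  unitHom FR Λ (.of α) (.of β) h

/-- A module `M` over `oFF_Λ R` is a preglider if all the maps `M(1_{X,Y})` are injective. -/
def IsPreglider (M : Mod (OFF FR Λ)) : Prop :=
  ∀ (X Y : OFF FR Λ) (h : OFF.le FR Λ X Y), Function.Injective (M.obj.map (unitHom FR Λ X Y h))

/-- A module `M` over `FF_Λ R` is a prefragment if all the maps `M(1_{α,β})` are injective. -/
def IsPrefragment (M : Mod (FF FR Λ)) : Prop :=
  ∀ (α β : Λ) (h : (α : Γ) ≤ (β : Γ)), Function.Injective (M.obj.map (unitHomFF FR Λ α β h))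

/-- The category of pregliders: the full subcategory of `Mod (oFF_Λ R)` of pregliders. -/
abbrev Preglid : Type (u + 1) :=
  ObjectProperty.FullSubcategory (fun M : Mod (OFF FR Λ) => IsPreglider FR Λ M)

instance : Preadditive (Preglid FR Λ) := Preadditive.inducedCategory _

/-- The category of prefragments: the full subcategory of `Mod (FF_Λ R)` of prefragments. -/
abbrev Prefrag : Type (u + 1) :=
  ObjectProperty.FullSubcategory (fun M : Mod (FF FR Λ) => IsPrefragment FR Λ M)

instance : Preadditive (Prefrag FR Λ) := Preadditive.inducedCategory _

/-- The inclusion `Preglid FR Λ ⥤ Mod (oFF_Λ R)`. -/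
def iotaF : Preglid FR Λ ⥤ Mod (OFF FR Λ) := ObjectProperty.ι _

/-- The inclusion `Prefrag FR Λ ⥤ Mod (FF_Λ R)`. -/
def etaF : Prefrag FR Λ ⥤ Mod (FF FR Λ) := ObjectProperty.ι _

/-- The component at `X` of a morphism of pregliders. -/
def pgapp {M N : Preglid FR Λ} (f : M ⟶ N) (X : OFF FR Λ) :
    M.obj.obj.obj X ⟶ N.obj.obj.obj X :=
  mapp (show M.obj ⟶ N.obj from f.hom) X

/-- The component at `X` of a morphism of prefragments. -/
def pfapp {M N : Prefrag FR Λ} (f : M ⟶ N) (X : FF FR Λ) :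
    M.obj.obj.obj X ⟶ N.obj.obj.obj X :=
  mapp (show M.obj ⟶ N.obj from f.hom) X

/-- The class `Σ` of morphisms of pregliders all of whose components at objects of `Λ`
are isomorphisms. -/
def SigmaClass : MorphismProperty (Preglid FR Λ) :=
  fun _ _ f => ∀ α : Λ, IsIso (pgapp FR Λ f (.of α))

/-- The category of glider representations: the localization of `Preglid FR Λ` at `Σ`. -/
abbrev Glid : Type (u + 1) := (SigmaClass FR Λ).Localization

/-- The localization functor `Q : Preglid FR Λ ⥤ Glid FR Λ`. -/
def QF : Preglid FR Λ ⥤ Glid FR Λ := (SigmaClass FR Λ).Q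

/-- The restriction functor `j^* : Mod (oFF_Λ R) ⥤ Mod (FF_Λ R)`. -/
def jStar : Mod (OFF FR Λ) ⥤ Mod (FF FR Λ) where
  obj M := ⟨jF FR Λ ⋙ M.obj, by haveI : M.obj.Additive := M.property; exact (inferInstance : (jF FR Λ ⋙ M.obj).Additive)⟩
  map {M N} f := ⟨Functor.whiskerLeft (jF FR Λ) (show M.obj ⟶ N.obj from f.hom)⟩
  map_id _ := rfl
  map_comp _ _ := rfl

theorem isPrefragment_jStar (M : Mod (OFF FR Λ)) (hM : IsPreglider FR Λ M) :
    IsPrefragment FR Λ ((jStar FR Λ).obj M) :=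
  fun α β h => hM (.of α) (.of β) h

/-- The restriction functor `j^* : Preglid FR Λ ⥤ Prefrag FR Λ`. -/
def jRes : Preglid FR Λ ⥤ Prefrag FR Λ where
  obj M := ⟨(jStar FR Λ).obj M.obj, isPrefragment_jStar FR Λ M.obj M.property⟩
  map f := ⟨(jStar FR Λ).map f.hom⟩
  map_id M := InducedCategory.hom_ext ((jStar FR Λ).map_id M.obj)
  map_comp f g := InducedCategory.hom_ext ((jStar FR Λ).map_comp f.hom g.hom)

theorem sigma_isInvertedBy : (SigmaClass FR Λ).IsInvertedBy (jRes FR Λ) := by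
  intro M N f hf
  haveI : (AdditiveFunctor.forget (FF FR Λ) AddCommGrpCat.{u}).Faithful :=
    ObjectProperty.faithful_ι _
  haveI : ∀ X : FF FR Λ, IsIso
      (((ObjectProperty.ι (fun M : Mod (FF FR Λ) => IsPrefragment FR Λ M) ⋙
        AdditiveFunctor.forget _ _).map ((jRes FR Λ).map f)).app X) := by
    rintro ⟨α⟩
    exact hf α
  haveI : IsIso ((ObjectProperty.ι (fun M : Mod (FF FR Λ) => IsPrefragment FR Λ M) ⋙
      AdditiveFunctor.forget _ _).map ((jRes FR Λ).map f)) :=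
    NatIso.isIso_of_isIso_app _
  exact isIso_of_reflects_iso ((jRes FR Λ).map f)
    (ObjectProperty.ι (fun M : Mod (FF FR Λ) => IsPrefragment FR Λ M) ⋙
      AdditiveFunctor.forget _ _)

/-- The canonical fully faithful functor `φ : Glid FR Λ ⥤ Prefrag FR Λ`,
the unique functor with `Q ⋙ φ = j^*`. -/
def phiF : Glid FR Λ ⥤ Prefrag FR Λ :=
  Localization.Construction.lift (jRes FR Λ) (sigma_isInvertedBy FR Λ)

theorem phiF_fac : QF FR Λ ⋙ phiF FR Λ = jRes FR Λ :=
  Localization.Construction.fac _ _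

section

variable {C : Type u} [Category.{u} C] [Preadditive C]

lemma mapp_naturality {M N : Mod C} (f : M ⟶ N) {U V : C} (r : U ⟶ V) (x : M.obj.obj U) :
    mapp f V (M.obj.map r x) = N.obj.map r (mapp f U x) :=
  ConcreteCategory.congr_hom (f.hom.naturality r) x

namespace Mod

def equalizer {M N : Mod C} (f g : M ⟶ N) : Mod C where
  obj :=
    { obj U := AddCommGrpCat.of ((mapp f U).hom.eqLocus (mapp g U).hom)
      map {U V} r := AddCommGrpCat.ofHom <|
        ((M.obj.map r).hom.comp (AddSubgroup.subtype _)).codRestrict _ fun x =>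
          (mapp_naturality f r x.1).trans <| (congrArg _ x.2).trans (mapp_naturality g r x.1).symm
      map_id U := by ext x; exact congrArg (· x.1) (M.obj.map_id U)
      map_comp r r' := by ext x; exact congrArg (· x.1) (M.obj.map_comp r r') }
  property := ⟨fun {_ _ a b} => by
    ext x; exact congrArg (· x.1) (M.property.map_add (f := a) (g := b))⟩

def equalizerι {M N : Mod C} (f g : M ⟶ N) : equalizer f g ⟶ M :=
  ObjectProperty.homMk
    { app U := AddCommGrpCat.ofHom (AddSubgroup.subtype ((mapp f U).hom.eqLocus (mapp g U).hom))
      naturality _ _ _ := rfl }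

lemma equalizerι_comp {M N : Mod C} (f g : M ⟶ N) :
    equalizerι f g ≫ f = equalizerι f g ≫ g := by
  ext U x
  exact x.2

def prod (M N : Mod C) : Mod C where
  obj :=
    { obj U := AddCommGrpCat.of (M.obj.obj U × N.obj.obj U)
      map r := AddCommGrpCat.ofHom ((M.obj.map r).hom.prodMap (N.obj.map r).hom)
      map_id U := by ext x <;> simp
      map_comp r r' := by ext x <;> simp }
  property := ⟨by intros; ext x <;> simp [M.property.map_add, N.property.map_add]⟩

def fst (M N : Mod C) : prod M N ⟶ M :=
  ObjectProperty.homMk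
    { app U := AddCommGrpCat.ofHom (AddMonoidHom.fst (M.obj.obj U) (N.obj.obj U))
      naturality _ _ _ := rfl }

def snd (M N : Mod C) : prod M N ⟶ N :=
  ObjectProperty.homMk
    { app U := AddCommGrpCat.ofHom (AddMonoidHom.snd (M.obj.obj U) (N.obj.obj U))
      naturality _ _ _ := rfl }

end Mod

end

section

variable {FR Λ}

lemma IsPreglider.equalizer {M N : Mod (OFF FR Λ)} (hM : IsPreglider FR Λ M) (f g : M ⟶ N) :
    IsPreglider FR Λ (Mod.equalizer f g) :=
  fun X Y h _ _ hab => Subtype.ext (hM X Y h (congrArg Subtype.val hab))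

lemma IsPreglider.prod {M N : Mod (OFF FR Λ)} (hM : IsPreglider FR Λ M)
    (hN : IsPreglider FR Λ N) : IsPreglider FR Λ (Mod.prod M N) :=
  fun X Y h _ _ hab =>
    Prod.ext (hM X Y h (congrArg Prod.fst hab)) (hN X Y h (congrArg Prod.snd hab))

namespace Preglid

def equalizer {M N : Preglid FR Λ} (f g : M ⟶ N) : Preglid FR Λ :=
  ⟨Mod.equalizer f.hom g.hom, M.property.equalizer _ _⟩

def equalizerι {M N : Preglid FR Λ} (f g : M ⟶ N) : equalizer f g ⟶ M :=
  ObjectProperty.homMk (Mod.equalizerι f.hom g.hom)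

lemma equalizerι_comp {M N : Preglid FR Λ} (f g : M ⟶ N) :
    equalizerι f g ≫ f = equalizerι f g ≫ g :=
  InducedCategory.hom_ext (Mod.equalizerι_comp f.hom g.hom)

def prod (M N : Preglid FR Λ) : Preglid FR Λ :=
  ⟨Mod.prod M.obj N.obj, M.property.prod N.property⟩

def fst (M N : Preglid FR Λ) : prod M N ⟶ M := ObjectProperty.homMk (Mod.fst M.obj N.obj)

def snd (M N : Preglid FR Λ) : prod M N ⟶ N := ObjectProperty.homMk (Mod.snd M.obj N.obj)

def pullback {Z Y W : Preglid FR Λ} (f : Z ⟶ W) (s : Y ⟶ W) : Preglid FR Λ :=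
  equalizer (fst Z Y ≫ f) (snd Z Y ≫ s)

def pullbackFst {Z Y W : Preglid FR Λ} (f : Z ⟶ W) (s : Y ⟶ W) : pullback f s ⟶ Z :=
  equalizerι _ _ ≫ fst Z Y

def pullbackSnd {Z Y W : Preglid FR Λ} (f : Z ⟶ W) (s : Y ⟶ W) : pullback f s ⟶ Y :=
  equalizerι _ _ ≫ snd Z Y

lemma pullback_condition {Z Y W : Preglid FR Λ} (f : Z ⟶ W) (s : Y ⟶ W) :
    pullbackSnd f s ≫ s = pullbackFst f s ≫ f :=
  (Category.assoc _ _ _).trans <| (equalizerι_comp _ _).symm.trans (Category.assoc _ _ _).symm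

end Preglid

lemma sigmaClass_iff_bijective {M N : Preglid FR Λ} (f : M ⟶ N) :
    SigmaClass FR Λ f ↔ ∀ α : Λ, Function.Bijective (pgapp FR Λ f (.of α)) :=
  forall_congr' fun _ => ConcreteCategory.isIso_iff_bijective _

lemma pgapp_eq_of_comp_eq {X Y Y' : Preglid FR Λ} {f g : X ⟶ Y} {s : Y ⟶ Y'}
    (hs : SigmaClass FR Λ s) (h : f ≫ s = g ≫ s) (α : Λ) :
    pgapp FR Λ f (.of α) = pgapp FR Λ g (.of α) :=
  have := hs α
  (cancel_mono (pgapp FR Λ s (.of α))).1 (congrArg (pgapp FR Λ · (.of α)) h)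

lemma sigmaClass_equalizerι {M N : Preglid FR Λ} (f g : M ⟶ N)
    (h : ∀ α : Λ, pgapp FR Λ f (.of α) = pgapp FR Λ g (.of α)) :
    SigmaClass FR Λ (Preglid.equalizerι f g) := by
  rw [sigmaClass_iff_bijective]
  exact fun α => ⟨Subtype.val_injective, fun x => ⟨⟨x, ConcreteCategory.congr_hom (h α) x⟩, rfl⟩⟩

lemma sigmaClass_pullbackFst {Z Y W : Preglid FR Λ} (f : Z ⟶ W) {s : Y ⟶ W}
    (hs : SigmaClass FR Λ s) : SigmaClass FR Λ (Preglid.pullbackFst f s) := by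
  rw [sigmaClass_iff_bijective] at hs ⊢
  intro α
  obtain ⟨hinj, hsurj⟩ := hs α
  refine ⟨fun a b hab => Subtype.ext (Prod.ext hab (hinj ?_)), fun z => ?_⟩
  · exact a.2.symm.trans ((congrArg _ hab).trans b.2)
  · obtain ⟨y, hy⟩ := hsurj (pgapp FR Λ f (.of α) z)
    exact ⟨⟨(z, y), hy.symm⟩, rfl⟩

lemma sigmaClass_eq_inverseImage_isomorphisms :
    SigmaClass FR Λ = (MorphismProperty.isomorphisms _).inverseImage (jRes FR Λ) := by
  ext M N f
  refine ⟨sigma_isInvertedBy FR Λ f, fun hf α => ?_⟩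
  have : IsIso ((jRes FR Λ).map f) := hf
  exact Functor.map_isIso (ObjectProperty.ι _ ⋙ AdditiveFunctor.forget _ _ ⋙
    (evaluation _ _).obj (FF.of α)) ((jRes FR Λ).map f)

instance : (SigmaClass FR Λ).IsMultiplicative := by
  rw [sigmaClass_eq_inverseImage_isomorphisms]
  infer_instance

lemma sigmaClass_iff_isIso_QF_map {M N : Preglid FR Λ} (f : M ⟶ N) :
    SigmaClass FR Λ f ↔ IsIso ((QF FR Λ).map f) := by
  refine ⟨(SigmaClass FR Λ).Q_inverts f, fun _ => ?_⟩
  rw [sigmaClass_eq_inverseImage_isomorphisms, MorphismProperty.inverseImage_iff,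
    MorphismProperty.isomorphisms.iff, ← phiF_fac, Functor.comp_map]
  infer_instance

end

section Statements

variable {Γ : Type u} [Group Γ] [PartialOrder Γ]
  [CovariantClass Γ Γ (· * ·) (· ≤ ·)] [CovariantClass Γ Γ (Function.swap (· * ·)) (· ≤ ·)]
  {R : Type u} [Ring R]

/-- The class `Σ` is a saturated right multiplicative system in
`Preglid FR`: (i) it contains identities and is closed under composition; (ii) the right
Ore condition holds; (iii) the right cancellability condition holds; (iv) `f ∈ Σ` if and
only if `Q(f)` is an isomorphism in `Glid FR`. -/
theorem statement_1 (FR : RingFiltration Γ R) (Λ : Set Γ) :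
    -- (i) identities and composition
    (∀ X : Preglid FR Λ, SigmaClass FR Λ (𝟙 X)) ∧
    (∀ {X Y Z : Preglid FR Λ} (f : X ⟶ Y) (g : Y ⟶ Z),
      SigmaClass FR Λ f → SigmaClass FR Λ g → SigmaClass FR Λ (f ≫ g)) ∧
    -- (ii) right Ore condition: every cospan `Z ⟶ W ⟵ Y` with `s : Y ⟶ W` in `Σ` can be
    -- completed to a commutative square with `t : X ⟶ Z` in `Σ`
    (∀ {Z W Y : Preglid FR Λ} (f : Z ⟶ W) (s : Y ⟶ W), SigmaClass FR Λ s →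
      ∃ (X : Preglid FR Λ) (g : X ⟶ Y) (t : X ⟶ Z),
        SigmaClass FR Λ t ∧ g ≫ s = t ≫ f) ∧
    -- (iii) right cancellability
    (∀ {X Y Y' : Preglid FR Λ} (f g : X ⟶ Y) (s : Y ⟶ Y'), SigmaClass FR Λ s →
      f ≫ s = g ≫ s →
      ∃ (X' : Preglid FR Λ) (t : X' ⟶ X), SigmaClass FR Λ t ∧ t ≫ f = t ≫ g) ∧
    -- (iv) saturation
    (∀ {X Y : Preglid FR Λ} (f : X ⟶ Y),
      SigmaClass FR Λ f ↔ IsIso ((QF FR Λ).map f)) := by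
  refine ⟨(SigmaClass FR Λ).id_mem, fun f g => (SigmaClass FR Λ).comp_mem f g, ?_, ?_,
    sigmaClass_iff_isIso_QF_map⟩
  · intro Z W Y f s hs
    exact ⟨_, Preglid.pullbackSnd f s, Preglid.pullbackFst f s, sigmaClass_pullbackFst f hs,
      Preglid.pullback_condition f s⟩
  · intro X Y Y' f g s hs h
    exact ⟨_, Preglid.equalizerι f g, sigmaClass_equalizerι f g (pgapp_eq_of_comp_eq hs h),
      Preglid.equalizerι_comp f g⟩

end Statements

end GliderPaper
end
end

section
/- Let C be a deflation quasi-abelian category. Then every morphism f : X → Y in C factors as f = i∘d, where d : X → coim f is the canonical cokernel map of ker f → X (so d is a cokernel, hence a deflation) and i : coim f → Y is a monomorphism. -/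
open CategoryTheory CategoryTheory.Limits

universe v u

/-!
Write `f = p ≫ i` with `p : X ⟶ coim f` the cokernel of `ker f → X`, and let `g ≫ i = 0`.
Pulling the cokernel `p` back along `g` gives a cokernel, hence an epimorphism `fst`. The other
leg `snd` of the square satisfies `snd ≫ f = fst ≫ g ≫ i = 0`, so it factors through `ker f` and
`fst ≫ g = snd ≫ p = 0`. Cancelling `fst` gives `g = 0`, so `i` is a monomorphism.
-/

namespace GliderPaper

section

variable {C : Type u} [Category.{v} C] [Preadditive C]

noncomputable instance normalEpi_cokernel_π {X Y : C} (g : X ⟶ Y) [HasCokernel g] :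
    NormalEpi (cokernel.π g) :=
  ⟨_, g, cokernel.condition g, cokernelIsCokernel g⟩

theorem eq_zero_of_isPullback_of_epi_fst {X Y Q K P : C} {f : X ⟶ Y} [HasKernel f]
    {p : X ⟶ Q} {i : Q ⟶ Y} (hpi : p ≫ i = f) (hp : kernel.ι f ≫ p = 0)
    {g : K ⟶ Q} (hg : g ≫ i = 0) {fst : P ⟶ K} {snd : P ⟶ X} (sq : IsPullback fst snd g p)
    [Epi fst] : g = 0 := by
  have hsnd : snd ≫ f = 0 := by
    rw [← hpi, ← Category.assoc, ← sq.w, Category.assoc, hg, comp_zero]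
  have hsndp : snd ≫ p = 0 := by
    rw [← kernel.lift_ι f snd hsnd, Category.assoc, hp, comp_zero]
  rw [← cancel_epi fst, sq.w, hsndp, comp_zero]

end

/-- Let `C` be a deflation quasi-abelian category: a pre-abelian
category (an additive category with kernels and cokernels) in which cokernels are
stable under pullback (the pullback of a morphism that is a cokernel -- i.e. a normal
epimorphism -- along any morphism is again a cokernel).  Then every morphism
`f : X ⟶ Y` factors as `f = d ≫ i`, where `d : X ⟶ coim f` is the canonical cokernel
map of `ker f → X` (hence a deflation) and `i : coim f ⟶ Y` (the morphism induced by
the universal property of the cokernel) is a monomorphism. -/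
theorem statement_15 {C : Type u} [Category.{v} C] [Preadditive C] [HasFiniteProducts C]
    [HasKernels C] [HasCokernels C]
    (hpb : ∀ {P X Y Z : C} (fst : P ⟶ X) (snd : P ⟶ Y) (f : X ⟶ Z) (g : Y ⟶ Z),
      IsPullback fst snd f g → Nonempty (NormalEpi g) → Nonempty (NormalEpi fst))
    {X Y : C} (f : X ⟶ Y) :
    cokernel.π (kernel.ι f) ≫ cokernel.desc (kernel.ι f) f (kernel.condition f) = f ∧
    Mono (cokernel.desc (kernel.ι f) f (kernel.condition f)) := by
  have : HasEqualizers C := Preadditive.hasEqualizers_of_hasKernels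
  have : HasPullbacks C := hasPullbacks_of_hasBinaryProducts_of_hasEqualizers C
  refine ⟨cokernel.π_desc _ _ _, Preadditive.mono_of_cancel_zero _ fun g hg => ?_⟩
  have sq := IsPullback.of_hasPullback g (cokernel.π (kernel.ι f))
  obtain ⟨_⟩ := hpb _ _ _ _ sq ⟨inferInstance⟩
  exact eq_zero_of_isPullback_of_epi_fst (cokernel.π_desc _ _ _) (cokernel.condition _) hg sq

end GliderPaper
end
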